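/- arXiv:1106.3153 — 3 statements merged into one kernel-verified Lean document; each statement's English description precedes it below -/
import Mathlib

section
/- Let y ∈ {0,1}^ℕ be computable with infinitely many 1's, and let U ⊆ ℕ × {0,1}* be a Martin-Löf test with respect to the uniform measure λ. Define U^y := {(n, a) : ∃ s ∈ U_n, a ∈ y(s)}, where y(s) is the finite set of strings a of length τ(|s|) with a_{τ(j)} = s_j for all j ≤ |s|. Then U^y is a Martin-Löf test with respect to λ, and for every x ∈ Ω and every n: x ∈ ⋃_{a ∈ U^y_n} Δ(a) if and only if x/y ∈ ⋃_{s ∈ U_n} Δ(s). -/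
open MeasureTheory Filter
open scoped ENNReal

/-- Cylinder set `Δ(s)` of infinite binary sequences extending the finite string `s`. -/
def cyl (s : List Bool) : Set (ℕ → Bool) := {x | ∀ i < s.length, x i = s.getD i false}

/-- The first `n` bits `y_1^n` of an infinite sequence `y`. -/
def pref (y : ℕ → Bool) (n : ℕ) : List Bool := List.ofFn (fun i : Fin n => y i)

/-- `tau y j` is the (0-indexed) position of the `(j+1)`-st `1` in `y`. -/
noncomputable def tau (y : ℕ → Bool) (j : ℕ) : ℕ := Nat.nth (fun i => y i = true) j

/-- The selected subsequence `x/y` of `x` at positions where `y` is `1`. -/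
noncomputable def selSeq (x y : ℕ → Bool) : ℕ → Bool := fun j => x (tau y j)

/-- The `n`-th level of a set `U ⊆ ℕ × strings`, as a set of sequences. -/
def lvl (U : Set (ℕ × List Bool)) (n : ℕ) : Set (ℕ → Bool) :=
  ⋃ s ∈ {s : List Bool | (n, s) ∈ U}, cyl s

/-- `A` is recursively enumerable (as a set of pairs). -/
def REset (A : Set (ℕ × List Bool)) : Prop :=
  ∃ f : ℕ × List Bool →. Unit, Partrec f ∧ ∀ a, a ∈ A ↔ (f a).Dom

/-- Martin-Löf test with respect to the measure `P`. -/
def MLTest (P : Measure (ℕ → Bool)) (U : Set (ℕ × List Bool)) : Prop :=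
  REset U ∧ (∀ n, lvl U (n + 1) ⊆ lvl U n) ∧ ∀ n, P (lvl U n) < (2 : ℝ≥0∞)⁻¹ ^ n

/-- `y` is Martin-Löf random with respect to `P`: it passes every ML test. -/
def MLRandom (P : Measure (ℕ → Bool)) (y : ℕ → Bool) : Prop :=
  ∀ U : Set (ℕ × List Bool), MLTest P U → ∃ n, y ∉ lvl U n

/-- `P` is a computable probability measure. -/
def ComputableMeasure (P : Measure (ℕ → Bool)) : Prop :=
  ∃ A : List Bool → ℕ → ℚ, Computable₂ A ∧
    ∀ s k, |(P (cyl s)).toReal - (A s k : ℝ)| < 1 / (k + 1)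

/-!
Selection `x ↦ x/y = x ∘ τ` preserves `λ`: a measure with `λ(Δ(s)) = 2^{-|s|}` agrees on the
cylinder π-system with the infinite product of fair coins, and that product is invariant under
restriction of coordinates along the injective map `τ`. Since `⋃_{a ∈ y(s)} Δ(a)` is exactly the
preimage of `Δ(s)` under selection, every level of `U^y` is the preimage of the same level of `U`,
which gives nestedness, the measure bound and the final equivalence at once. `U^y` is r.e.
because `a` determines the only candidate `s`: the bits of `a` at the selected positions, and
`a ∈ y(s)` exactly when moreover `a` is empty or ends at a selected position.
-/

namespace PiNat

variable {E : ℕ → Type*}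

theorem isPiSystem_cylinders : IsPiSystem {s : Set (∀ n, E n) | ∃ x n, s = cylinder x n} := by
  rintro _ ⟨x, m, rfl⟩ _ ⟨z, n, rfl⟩ ⟨w, hwx, hwz⟩
  rw [← mem_cylinder_iff_eq.1 hwx, ← mem_cylinder_iff_eq.1 hwz]
  rcases le_total m n with h | h
  · exact ⟨w, n, Set.inter_eq_right.2 (cylinder_anti w h)⟩
  · exact ⟨w, m, Set.inter_eq_left.2 (cylinder_anti w h)⟩

variable [∀ n, TopologicalSpace (E n)] [∀ n, DiscreteTopology (E n)] [∀ n, Countable (E n)]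
  [∀ n, MeasurableSpace (E n)] [∀ n, BorelSpace (E n)]

theorem generateFrom_cylinders :
    MeasurableSpace.generateFrom {s : Set (∀ n, E n) | ∃ x n, s = cylinder x n} =
      MeasurableSpace.pi := by
  rw [← (isTopologicalBasis_cylinders (E := E)).borel_eq_generateFrom]
  exact BorelSpace.measurable_eq.symm

theorem _root_.MeasureTheory.Measure.ext_of_cylinder {μ ν : Measure (∀ n, E n)}
    [IsFiniteMeasure μ] (h : ∀ x n, μ (cylinder x n) = ν (cylinder x n)) : μ = ν := by
  refine ext_of_generate_finite _ generateFrom_cylinders.symm isPiSystem_cylinders ?_ ?_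
  · rintro _ ⟨x, n, rfl⟩
    exact h x n
  · obtain hE | ⟨⟨x⟩⟩ := isEmpty_or_nonempty (∀ n, E n)
    · simp [Set.univ_eq_empty_iff.2 hE]
    · simpa using h x 0

end PiNat

theorem MeasureTheory.Measure.infinitePi_map_comp {ι κ X : Type*} [MeasurableSpace X]
    (μ : κ → Measure X) [∀ k, IsProbabilityMeasure (μ k)] {f : ι → κ} (hf : f.Injective) :
    (Measure.infinitePi μ).map (fun x => x ∘ f) = Measure.infinitePi (fun i => μ (f i)) := by
  refine Measure.eq_infinitePi _ fun s t ht => ?_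
  have hpre : (fun x : κ → X => x ∘ f) ⁻¹' Set.pi s t =
      Set.pi (s.map ⟨f, hf⟩) (Function.extend f t fun _ => Set.univ) := by
    ext x
    simp [hf.extend_apply]
  have hext : ∀ k, MeasurableSet (Function.extend f t (fun _ => Set.univ) k) := by
    intro k
    classical
    rw [Function.extend_def]
    split_ifs
    exacts [ht _, MeasurableSet.univ]
  rw [Measure.map_apply (by fun_prop) (.pi s.countable_toSet fun i _ => ht i), hpre,
    Measure.infinitePi_pi _ fun k _ => hext k, Finset.prod_map]
  simp [hf.extend_apply]

noncomputable def coinFlips : Measure (ℕ → Bool) :=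
  Measure.infinitePi fun _ => (PMF.uniformOfFintype Bool).toMeasure

theorem coinFlips_cylinder (x : ℕ → Bool) (n : ℕ) :
    coinFlips (PiNat.cylinder x n) = 2⁻¹ ^ n := by
  rw [coinFlips, PiNat.cylinder_eq_pi,
    Measure.infinitePi_pi _ fun _ _ => measurableSet_singleton _]
  simp

theorem pref_length (x : ℕ → Bool) (n : ℕ) : (pref x n).length = n := by simp [pref]

theorem pref_getD (x : ℕ → Bool) {n i : ℕ} (h : i < n) : (pref x n).getD i false = x i := by
  simp [pref, h]

theorem cylinder_eq_cyl (x : ℕ → Bool) (n : ℕ) : PiNat.cylinder x n = cyl (pref x n) := by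
  ext z
  simp only [PiNat.mem_cylinder_iff, cyl, Set.mem_ofPred_eq, pref_length]
  exact forall₂_congr fun i hi => by rw [pref_getD x hi]

theorem mem_cyl_pref (x : ℕ → Bool) (n : ℕ) : x ∈ cyl (pref x n) := by
  rw [← cylinder_eq_cyl]
  exact PiNat.self_mem_cylinder x n

theorem measurableSet_cyl (s : List Bool) : MeasurableSet (cyl s) :=
  show MeasurableSet (PiNat.cylinder (fun i => s.getD i false) s.length) from
    (PiNat.isOpen_cylinder _ _ _).measurableSet

theorem measurableSet_lvl (U : Set (ℕ × List Bool)) (n : ℕ) : MeasurableSet (lvl U n) :=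
  .biUnion (Set.to_countable _) fun s _ => measurableSet_cyl s

theorem eq_coinFlips {lam : Measure (ℕ → Bool)} [IsFiniteMeasure lam]
    (hlam : ∀ s : List Bool, lam (cyl s) = (2 : ℝ≥0∞)⁻¹ ^ s.length) : lam = coinFlips :=
  Measure.ext_of_cylinder fun x n => by
    rw [coinFlips_cylinder, cylinder_eq_cyl, hlam, pref_length]

theorem measurable_selSeq (y : ℕ → Bool) : Measurable (selSeq · y) := by
  unfold selSeq
  fun_prop

section Selection

variable {y : ℕ → Bool}

theorem map_selSeq_eq (hy : {i | y i = true}.Infinite) {lam : Measure (ℕ → Bool)}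
    [IsFiniteMeasure lam] (hlam : ∀ s : List Bool, lam (cyl s) = (2 : ℝ≥0∞)⁻¹ ^ s.length) :
    lam.map (selSeq · y) = lam := by
  rw [eq_coinFlips hlam]
  exact Measure.infinitePi_map_comp _ (Nat.nth_injective hy)

noncomputable def selLength (y : ℕ → Bool) (n : ℕ) : ℕ :=
  if n = 0 then 0 else tau y (n - 1) + 1

/-- The set `y(s)` of the paper. -/
def spread (y : ℕ → Bool) (s : List Bool) : Set (List Bool) :=
  {a | a.length = selLength y s.length ∧
    ∀ j < s.length, a.getD (tau y j) false = s.getD j false}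

/-- The test `U^y` of the paper. -/
def selTest (y : ℕ → Bool) (U : Set (ℕ × List Bool)) : Set (ℕ × List Bool) :=
  {p | ∃ s, (p.1, s) ∈ U ∧ p.2 ∈ spread y s}

theorem tau_lt_selLength (hy : {i | y i = true}.Infinite) {j n : ℕ} (hj : j < n) :
    tau y j < selLength y n := by
  rw [selLength, if_neg (by omega)]
  exact Nat.lt_succ_of_le ((Nat.nth_le_nth hy).2 (by omega))

theorem preimage_selSeq_cyl (hy : {i | y i = true}.Infinite) (s : List Bool) :
    (selSeq · y) ⁻¹' cyl s = ⋃ a ∈ spread y s, cyl a := by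
  ext x
  simp only [Set.mem_preimage, Set.mem_iUnion, exists_prop]
  constructor
  · intro hx
    refine ⟨pref x (selLength y s.length), ⟨pref_length _ _, fun j hj => ?_⟩, mem_cyl_pref x _⟩
    rw [pref_getD x (tau_lt_selLength hy hj)]
    exact hx j hj
  · rintro ⟨a, ha, hxa⟩ j hj
    rw [← ha.2 j hj]
    exact hxa _ (ha.1 ▸ tau_lt_selLength hy hj)

theorem lvl_selTest (hy : {i | y i = true}.Infinite) (U : Set (ℕ × List Bool)) (n : ℕ) :
    lvl (selTest y U) n = (selSeq · y) ⁻¹' lvl U n := by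
  simp only [lvl, Set.preimage_iUnion₂, preimage_selSeq_cyl hy]
  ext x
  simp [selTest]

-- Recursive rather than the closed form of `selBits_eq_map`, so that it is computable from `y`
-- without computing `tau`.
def selBits (y : ℕ → Bool) (a : List Bool) : ℕ → List Bool
  | 0 => []
  | n + 1 => cond (y n) (selBits y a n ++ [a.getD n false]) (selBits y a n)

theorem selBits_eq_map (y : ℕ → Bool) (a : List Bool) (n : ℕ) :
    selBits y a n =
      (List.range (Nat.count (fun i => y i = true) n)).map fun j => a.getD (tau y j) false := by
  induction n with
  | zero => rfl
  | succ n ih =>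
    cases h : y n
    · simp [selBits, h, Nat.count_succ, ih]
    · simp [selBits, h, Nat.count_succ, ih, List.range_succ, tau,
        Nat.nth_count (p := fun i => y i = true) h]

theorem mem_spread_iff (hy : {i | y i = true}.Infinite) {s a : List Bool} :
    a ∈ spread y s ↔ (a = [] ∨ y (a.length - 1) = true) ∧ selBits y a a.length = s := by
  constructor
  · rintro ⟨hlen, hbits⟩
    cases hk : s.length with
    | zero => simp_all [selLength, selBits]
    | succ k =>
      have ha : a.length = tau y k + 1 := by rw [hlen, selLength, hk]; simp
      have hyk : y (tau y k) = true := Nat.nth_mem_of_infinite hy k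
      refine ⟨Or.inr (by simpa [ha] using hyk), ?_⟩
      have hcount : Nat.count (fun i => y i = true) (tau y k + 1) = k + 1 := by
        rw [Nat.count_succ, if_pos hyk]
        exact congrArg (· + 1) (Nat.count_nth_of_infinite hy k)
      rw [selBits_eq_map, ha, hcount]
      refine List.ext_getElem (by simp [hk]) fun j h1 h2 => ?_
      rw [← List.getD_eq_getElem _ false h2, ← hbits j h2]
      simp
  · rintro ⟨hend, rfl⟩
    obtain rfl | ha := eq_or_ne a []
    · simp [spread, selLength, selBits]
    obtain ⟨m, hm⟩ : ∃ m, a.length = m + 1 :=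
      Nat.exists_eq_add_one_of_ne_zero (by simpa using ha)
    have hym : y m = true := by simpa [hm] using hend.resolve_left ha
    rw [selBits_eq_map, hm, Nat.count_succ, if_pos hym]
    refine ⟨?_, fun j hj => ?_⟩
    · simp [selLength, tau, Nat.nth_count (p := fun i => y i = true) hym, hm]
    · simp_all

theorem mem_selTest_iff (hy : {i | y i = true}.Infinite) (U : Set (ℕ × List Bool)) (n : ℕ)
    (a : List Bool) :
    (n, a) ∈ selTest y U ↔
      (a = [] ∨ y (a.length - 1) = true) ∧ (n, selBits y a a.length) ∈ U := by
  simp [selTest, mem_spread_iff hy, and_comm]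

theorem computable₂_selBits (hy : Computable y) : Computable₂ (selBits y) := by
  have step : Computable₂ fun (p : List Bool × ℕ) (q : ℕ × List Bool) =>
      cond (y q.1) (q.2 ++ [p.1.getD q.1 false]) q.2 :=
    Computable.cond (hy.comp (Computable.fst.comp Computable.snd))
      (Computable.list_concat.comp (Computable.snd.comp Computable.snd)
        ((Primrec.list_getD false).to_comp.comp (Computable.fst.comp Computable.fst)
          (Computable.fst.comp Computable.snd)))
      (Computable.snd.comp Computable.snd)
  refine (Computable.nat_rec Computable.snd (Computable.const []) step).of_eq ?_
  rintro ⟨a, n⟩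
  induction n with
  | zero => rfl
  | succ n ih => simp [selBits, ← ih]

theorem REset.preimage {A : Set (ℕ × List Bool)} (hA : REset A)
    {g : ℕ × List Bool → Option (ℕ × List Bool)} (hg : Computable g) :
    REset {q | ∃ p ∈ g q, p ∈ A} := by
  obtain ⟨f, hf, hfA⟩ := hA
  refine ⟨fun q => (g q : Part (ℕ × List Bool)).bind fun p => f p,
    (Computable.ofOption hg).bind (hf.comp Computable.snd), fun q => ?_⟩
  rcases hq : g q with _ | p <;> simp [hq, hfA, -Prod.exists]

theorem REset.selTest (hy : {i | y i = true}.Infinite) (hcomp : Computable y)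
    {U : Set (ℕ × List Bool)} (hU : REset U) : REset (selTest y U) := by
  have hlen : Computable fun q : ℕ × List Bool => q.2.length :=
    Computable.list_length.comp Computable.snd
  have hg : Computable fun q : ℕ × List Bool =>
      cond (q.2.length == 0 || y (q.2.length - 1)) (some (q.1, selBits y q.2 q.2.length)) none :=
    Computable.cond
      (Primrec.or.to_comp.comp (Primrec.beq.to_comp.comp hlen (Computable.const 0))
        (hcomp.comp (Computable.pred.comp hlen)))
      (Computable.option_some.comp
        (Computable.fst.pair ((computable₂_selBits hcomp).comp Computable.snd hlen)))
      (Computable.const none)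
  convert hU.preimage hg using 1
  ext ⟨n, a⟩
  rw [mem_selTest_iff hy]
  by_cases h : a = [] ∨ y (a.length - 1) = true
  · have hc : (a.length == 0 || y (a.length - 1)) = true := by simpa using h
    simp [hc, h]
  · have hc : (a.length == 0 || y (a.length - 1)) = false := by simpa using h
    simp [hc, h]

theorem MLTest.selTest (hy : {i | y i = true}.Infinite) (hcomp : Computable y)
    {lam : Measure (ℕ → Bool)} [IsFiniteMeasure lam]
    (hlam : ∀ s : List Bool, lam (cyl s) = (2 : ℝ≥0∞)⁻¹ ^ s.length)
    {U : Set (ℕ × List Bool)} (hU : MLTest lam U) : MLTest lam (selTest y U) := by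
  obtain ⟨hre, hmono, hmeas⟩ := hU
  refine ⟨hre.selTest hy hcomp, fun n => ?_, fun n => ?_⟩
  · rw [lvl_selTest hy, lvl_selTest hy]
    exact Set.preimage_mono (hmono n)
  · rw [lvl_selTest hy, ← Measure.map_apply (measurable_selSeq y) (measurableSet_lvl U n),
      map_selSeq_eq hy hlam]
    exact hmeas n

end Selection

/-- Relativization of a test along selection by a computable `y`: `U^y` is again a
Martin-Löf test, and `x ∈ Ũ^y_n ↔ x/y ∈ Ũ_n`. -/
theorem selected_test_is_test
    (lam : Measure (ℕ → Bool)) [IsProbabilityMeasure lam]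
    (hlam : ∀ s : List Bool, lam (cyl s) = (2 : ℝ≥0∞)⁻¹ ^ s.length)
    (y : ℕ → Bool) (hcomp : Computable y) (hy : {i | y i = true}.Infinite)
    (U : Set (ℕ × List Bool)) (hU : MLTest lam U) :
    MLTest lam
      {p : ℕ × List Bool | ∃ s : List Bool, (p.1, s) ∈ U ∧
        p.2.length = (if s.length = 0 then 0 else tau y (s.length - 1) + 1) ∧
        ∀ j < s.length, p.2.getD (tau y j) false = s.getD j false} ∧
    ∀ (x : ℕ → Bool) (n : ℕ),
      x ∈ lvl {p : ℕ × List Bool | ∃ s : List Bool, (p.1, s) ∈ U ∧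
          p.2.length = (if s.length = 0 then 0 else tau y (s.length - 1) + 1) ∧
          ∀ j < s.length, p.2.getD (tau y j) false = s.getD j false} n
        ↔ selSeq x y ∈ lvl U n := by
  exact ⟨hU.selTest hy hcomp hlam, fun x n => Set.ext_iff.1 (lvl_selTest hy U n) x⟩
end

section
/- Suppose lim_n K(y_1^n)/n = 0, lim_n (1/n)Σ_{i=1}^n y_i = d with 0 < d < 1, and lim_n K(x_1^n)/n = 1. Then lim_n K(x_1^n/y_1^n | y_1^n)/n₁ = 1 and lim_n K(x_1^n/ȳ_1^n | y_1^n)/(n − n₁) = 1, where n₁ = Σ_{i=1}^n y_i and ȳ is the bitwise complement of y. -/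
/-!
Write `a n` and `b n` for the conditional complexities of the selected and of the unselected
part of `x_1^n`, and `t n` for the number of ones in `y_1^n`. The length bound gives
`a n ≤ t n + O(log n)` and `b n ≤ n - t n + O(log n)`, while splitting, subadditivity and
`K(y_1^n) = o(n)` give `a n + b n ≥ K(x_1^n) - o(n) = n - o(n)`. Two upper bounds whose sum is
asymptotically attained must each be asymptotically attained, so `a n / n → d` and
`b n / n → 1 - d`; dividing by `t n / n → d` and `1 - t n / n → 1 - d` gives the claim.
-/

open Filter

/-- Subsequence of the string `x` at the positions where `y` is `true`. -/
def selT (x y : List Bool) : List Bool :=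
  ((x.zip y).filter (fun p => p.2)).map Prod.fst

/-- Subsequence of the string `x` at the positions where `y` is `false`. -/
def selF (x y : List Bool) : List Bool :=
  ((x.zip y).filter (fun p => !p.2)).map Prod.fst

open Topology

theorem length_selT_add_length_selF (u w : List Bool) :
    (selT u w).length + (selF u w).length = (u.zip w).length := by
  simp only [selT, selF, List.length_map]
  exact ((u.zip w).length_eq_length_filter_add _).symm

theorem length_selT {u w : List Bool} (h : w.length ≤ u.length) :
    (selT u w).length = w.count true := by
  conv_rhs => rw [← List.map_snd_zip h]
  rw [selT, List.length_map, List.count_eq_length_filter, List.filter_map, List.length_map]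
  simp [Function.comp_def]

section Limits

theorem tendsto_logb_add_two_div_natCast (a b : ℝ) :
    Tendsto (fun n : ℕ => (a * Real.logb 2 (n + 2) + b) / n) atTop (𝓝 0) := by
  have hlog : Tendsto (fun x : ℝ => Real.log x / (1 * x + -2)) atTop (𝓝 0) := by
    simpa using Real.tendsto_pow_log_div_mul_add_atTop 1 (-2) 1 one_ne_zero
  have hshift := hlog.comp (tendsto_atTop_add_const_right _ 2 tendsto_natCast_atTop_atTop)
  have h := ((hshift.div_const (Real.log 2)).const_mul a).add
    (tendsto_const_div_atTop_nhds_zero_nat b)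
  simp only [zero_div, mul_zero, add_zero] at h
  refine h.congr fun n => ?_
  simp only [Function.comp, Real.logb]
  ring

variable {ι : Type*} {l : Filter ι}

theorem tendsto_of_le_of_le_of_le_add {a b p q s : ι → ℝ} {α β : ℝ}
    (hp : Tendsto p l (𝓝 α)) (hq : Tendsto q l (𝓝 β)) (hs : Tendsto s l (𝓝 (α + β)))
    (hap : ∀ᶠ i in l, a i ≤ p i) (hbq : ∀ᶠ i in l, b i ≤ q i)
    (hsab : ∀ᶠ i in l, s i ≤ a i + b i) :
    Tendsto a l (𝓝 α) ∧ Tendsto b l (𝓝 β) := by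
  constructor
  · refine tendsto_of_tendsto_of_tendsto_of_le_of_le' (by simpa using hs.sub hq) hp ?_ hap
    filter_upwards [hbq, hsab] with i hbi hsi
    linarith
  · refine tendsto_of_tendsto_of_tendsto_of_le_of_le' (by simpa using hs.sub hp) hq ?_ hbq
    filter_upwards [hap, hsab] with i hai hsi
    linarith

theorem Filter.Tendsto.sub_div_self {g h : ι → ℝ} {α : ℝ}
    (hg : Tendsto (fun i => g i / h i) l (𝓝 α)) (hh : ∀ᶠ i in l, h i ≠ 0) :
    Tendsto (fun i => (h i - g i) / h i) l (𝓝 (1 - α)) := by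
  refine (tendsto_const_nhds.sub hg).congr' ?_
  filter_upwards [hh] with i hi
  rw [sub_div, div_self hi]

theorem tendsto_div_of_tendsto_div_of_tendsto_div {f g h : ι → ℝ} {α : ℝ}
    (hf : Tendsto (fun i => f i / h i) l (𝓝 α)) (hg : Tendsto (fun i => g i / h i) l (𝓝 α))
    (hα : α ≠ 0) (hh : ∀ᶠ i in l, h i ≠ 0) :
    Tendsto (fun i => f i / g i) l (𝓝 1) := by
  have hfg := hf.div hg hα
  rw [div_self hα] at hfg
  refine hfg.congr' ?_
  filter_upwards [hh] with i hi
  exact div_div_div_cancel_right₀ hi _ _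

end Limits

section Complexity

variable {K : List Bool → ℕ} {CK : List Bool → List Bool → ℕ}
  {K2 : List Bool × List Bool → List Bool → ℕ}

theorem CK_le_length_add_logb {c : ℕ}
    (hF4 : ∀ u w : List Bool, (CK u w : ℝ) ≤ u.length + c * Real.logb 2 (u.length + 2) + c)
    (u w : List Bool) {n : ℕ} (hu : u.length ≤ n) :
    (CK u w : ℝ) ≤ u.length + c * Real.logb 2 (n + 2) + c := by
  have hlog : Real.logb 2 (u.length + 2) ≤ Real.logb 2 (n + 2) :=
    Real.logb_le_logb_of_le one_lt_two (by positivity) (by gcongr)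
  have := hF4 u w
  have : (c : ℝ) * Real.logb 2 (u.length + 2) ≤ c * Real.logb 2 (n + 2) := by gcongr
  linarith

theorem K_le_CK_selT_add_CK_selF {c₁ c₂ c₃ : ℕ}
    (hF1 : ∀ u w : List Bool, (K u : ℤ) - CK u w ≤ K w + c₁)
    (hF2 : ∀ u w : List Bool, u.length = w.length →
      (CK u w : ℤ) - K2 (selT u w, selF u w) w ≤ c₂)
    (hF3 : ∀ u v w : List Bool, (K2 (u, v) w : ℝ) ≤ CK u w + CK v w
      + c₃ * Real.logb 2 (u.length + v.length + 2) + c₃)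
    {u w : List Bool} (h : u.length = w.length) :
    (K u : ℝ) ≤ CK (selT u w) w + CK (selF u w) w + K w
      + c₃ * Real.logb 2 (u.length + 2) + (c₁ + c₂ + c₃) := by
  have h1 : (K u : ℝ) - CK u w ≤ K w + c₁ := by exact_mod_cast hF1 u w
  have h2 : (CK u w : ℝ) - K2 (selT u w, selF u w) w ≤ c₂ := by exact_mod_cast hF2 u w h
  have h3 := hF3 (selT u w) (selF u w) w
  have hsum : ((selT u w).length : ℝ) + (selF u w).length = u.length := by
    exact_mod_cast (length_selT_add_length_selF u w).trans (by simp [h])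
  rw [hsum] at h3
  linarith

theorem tendsto_CK_selT_div_and_CK_selF_div {c₁ c₂ c₃ c₄ : ℕ}
    (hF1 : ∀ u w : List Bool, (K u : ℤ) - CK u w ≤ K w + c₁)
    (hF2 : ∀ u w : List Bool, u.length = w.length →
      (CK u w : ℤ) - K2 (selT u w, selF u w) w ≤ c₂)
    (hF3 : ∀ u v w : List Bool, (K2 (u, v) w : ℝ) ≤ CK u w + CK v w
      + c₃ * Real.logb 2 (u.length + v.length + 2) + c₃)
    (hF4 : ∀ u w : List Bool,
      (CK u w : ℝ) ≤ u.length + c₄ * Real.logb 2 (u.length + 2) + c₄)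
    {x y : ℕ → Bool} {d : ℝ}
    (hdens : Tendsto (fun n => ((pref y n).count true : ℝ) / n) atTop (𝓝 d))
    (hy : Tendsto (fun n => (K (pref y n) : ℝ) / n) atTop (𝓝 0))
    (hx : Tendsto (fun n => (K (pref x n) : ℝ) / n) atTop (𝓝 1)) :
    Tendsto (fun n => (CK (selT (pref x n) (pref y n)) (pref y n) : ℝ) / n) atTop (𝓝 d) ∧
    Tendsto (fun n => (CK (selF (pref x n) (pref y n)) (pref y n) : ℝ) / n) atTop
      (𝓝 (1 - d)) := by
  have hlenx (n : ℕ) : (pref x n).length = n := List.length_ofFn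
  have hlen (n : ℕ) : (pref x n).length = (pref y n).length := by simp [pref]
  have hlenSum (n : ℕ) :
      (selT (pref x n) (pref y n)).length + (selF (pref x n) (pref y n)).length = n := by
    simpa [pref] using length_selT_add_length_selF (pref x n) (pref y n)
  have hlenT (n : ℕ) :
      ((selT (pref x n) (pref y n)).length : ℝ) = (pref y n).count true := by
    rw [length_selT (hlen n).ge]
  have hlenF (n : ℕ) :
      ((selF (pref x n) (pref y n)).length : ℝ) = n - (pref y n).count true := by
    have hlenSum' : ((selT (pref x n) (pref y n)).length : ℝ)
        + (selF (pref x n) (pref y n)).length = n := by exact_mod_cast hlenSum n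
    linarith [hlenT n]
  have hn : ∀ᶠ n : ℕ in atTop, (n : ℝ) ≠ 0 :=
    tendsto_natCast_atTop_atTop.eventually_ne_atTop 0
  refine tendsto_of_le_of_le_of_le_add
    (p := fun n => (pref y n).count true / n + (c₄ * Real.logb 2 (n + 2) + c₄) / n)
    (q := fun n => (n - (pref y n).count true) / n + (c₄ * Real.logb 2 (n + 2) + c₄) / n)
    (s := fun n => (K (pref x n) : ℝ) / n - K (pref y n) / n
      - (c₃ * Real.logb 2 (n + 2) + (c₁ + c₂ + c₃)) / n)
    ?_ ?_ ?_ ?_ ?_ ?_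
  · simpa using hdens.add (tendsto_logb_add_two_div_natCast c₄ c₄)
  · simpa using (hdens.sub_div_self hn).add (tendsto_logb_add_two_div_natCast c₄ c₄)
  · convert (hx.sub hy).sub (tendsto_logb_add_two_div_natCast c₃ (c₁ + c₂ + c₃)) using 2
    ring
  · refine .of_forall fun n => ?_
    rw [← add_div]
    refine div_le_div_of_nonneg_right ?_ n.cast_nonneg
    have := CK_le_length_add_logb hF4 (selT (pref x n) (pref y n)) (pref y n) (n := n)
      (by have := hlenSum n; omega)
    linarith [hlenT n]
  · refine .of_forall fun n => ?_
    rw [← add_div]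
    refine div_le_div_of_nonneg_right ?_ n.cast_nonneg
    have := CK_le_length_add_logb hF4 (selF (pref x n) (pref y n)) (pref y n) (n := n)
      (by have := hlenSum n; omega)
    linarith [hlenF n]
  · refine .of_forall fun n => ?_
    rw [← sub_div, ← sub_div, ← add_div]
    refine div_le_div_of_nonneg_right ?_ n.cast_nonneg
    have := K_le_CK_selT_add_CK_selF hF1 hF2 hF3 (hlen n)
    rw [hlenx] at this
    linarith

end Complexity

/-- `K` is prefix complexity, `CK` conditional prefix complexity and `K2` conditional prefix
complexity of pairs; the standard complexity facts enter as the hypotheses `F1`–`F4`. -/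
theorem selected_complexity_rate_one_of_zero_rate_selector
    (K : List Bool → ℕ) (CK : List Bool → List Bool → ℕ)
    (K2 : List Bool × List Bool → List Bool → ℕ)
    (F1 : ∃ c : ℕ, ∀ u w : List Bool,
      (K u : ℤ) - CK u w ≤ K w + c ∧ (CK u w : ℤ) - K u ≤ K w + c)
    (F2 : ∃ c : ℕ, ∀ u w : List Bool, u.length = w.length →
      (CK u w : ℤ) - K2 (selT u w, selF u w) w ≤ c ∧
      (K2 (selT u w, selF u w) w : ℤ) - CK u w ≤ c)
    (F3 : ∃ c : ℕ, ∀ u v w : List Bool,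
      (K2 (u, v) w : ℝ) ≤ CK u w + CK v w
        + c * Real.logb 2 (u.length + v.length + 2) + c)
    (F4 : ∃ c : ℕ, ∀ u w : List Bool,
      (CK u w : ℝ) ≤ u.length + c * Real.logb 2 (u.length + 2) + c)
    (x y : ℕ → Bool) (d : ℝ) (hd0 : 0 < d) (hd1 : d < 1)
    (hdens : Tendsto (fun n => ((pref y n).count true : ℝ) / n) atTop (nhds d))
    (hy : Tendsto (fun n => (K (pref y n) : ℝ) / n) atTop (nhds 0))
    (hx : Tendsto (fun n => (K (pref x n) : ℝ) / n) atTop (nhds 1)) :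
    Tendsto (fun n => (CK (selT (pref x n) (pref y n)) (pref y n) : ℝ)
        / ((pref y n).count true : ℝ)) atTop (nhds 1) ∧
    Tendsto (fun n => (CK (selF (pref x n) (pref y n)) (pref y n) : ℝ)
        / ((n : ℝ) - (pref y n).count true)) atTop (nhds 1) := by
  obtain ⟨c₁, hF1⟩ := F1
  obtain ⟨c₂, hF2⟩ := F2
  obtain ⟨c₃, hF3⟩ := F3
  obtain ⟨c₄, hF4⟩ := F4
  have hn : ∀ᶠ n : ℕ in atTop, (n : ℝ) ≠ 0 :=
    tendsto_natCast_atTop_atTop.eventually_ne_atTop 0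
  obtain ⟨hselT, hselF⟩ := tendsto_CK_selT_div_and_CK_selF_div
    (fun u w => (hF1 u w).1) (fun u w h => (hF2 u w h).1) hF3 hF4 hdens hy hx
  exact ⟨tendsto_div_of_tendsto_div_of_tendsto_div hselT hdens hd0.ne' hn,
    tendsto_div_of_tendsto_div_of_tendsto_div hselF (hdens.sub_div_self hn)
      (sub_ne_zero.2 hd1.ne') hn⟩
end

section
/- Suppose lim_n K(y_1^n)/n = 0, lim_n (1/n)Σ_{i=1}^n y_i = 1, and lim_n K(x_1^n)/n = 1. Then lim_n K(x_1^n/y_1^n | y_1^n)/n₁ = 1, where n₁ = Σ_{i=1}^n y_i. -/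
/-!
Given `y₁ⁿ`, the string `x₁ⁿ` carries the same information as the pair formed by its selected bits
and its `n - n₁` remaining bits, so
`K(x₁ⁿ) ≤ K(y₁ⁿ) + K(x₁ⁿ/y₁ⁿ | y₁ⁿ) + (n - n₁) + O(log n)`.
With `K(x₁ⁿ) = n + o(n)`, `K(y₁ⁿ) = o(n)` and `n - n₁ = o(n)` this gives
`K(x₁ⁿ/y₁ⁿ | y₁ⁿ) ≥ n - o(n)`, while the length bound gives `K(x₁ⁿ/y₁ⁿ | y₁ⁿ) ≤ n₁ + O(log n)`.
Dividing by `n₁ = n - o(n)` gives the rate `1`.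
-/

open Filter

open Topology Asymptotics

lemma length_pref (y : ℕ → Bool) (n : ℕ) : (pref y n).length = n := by simp [pref]

lemma length_selT_selF {x y : List Bool} (h : x.length = y.length) :
    (selT x y).length = y.count true ∧ (selF x y).length = y.count false := by
  induction x generalizing y with
  | nil => cases y <;> simp_all [selT, selF]
  | cons a x ih =>
    cases y with
    | nil => simp at h
    | cons b y =>
      have ih' := ih (y := y) (by simpa using h)
      cases b <;> simp [selT, selF] at ih' ⊢ <;> omega

lemma tendsto_count_false_div {y : ℕ → Bool} {d : ℝ}
    (h : Tendsto (fun n => ((pref y n).count true : ℝ) / n) atTop (𝓝 d)) :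
    Tendsto (fun n => ((pref y n).count false : ℝ) / n) atTop (𝓝 (1 - d)) := by
  refine (tendsto_const_nhds.sub h).congr' ?_
  filter_upwards [eventually_ne_atTop 0] with n hn
  have hsum := congrArg (Nat.cast (R := ℝ)) (pref y n).count_true_add_count_false
  push_cast [length_pref] at hsum
  field_simp
  linarith

lemma tendsto_div_natCast_of_sandwich {f lo hi E : ℕ → ℝ} {a : ℝ}
    (hlo : Tendsto (fun n => lo n / n) atTop (𝓝 a))
    (hhi : Tendsto (fun n => hi n / n) atTop (𝓝 a))
    (hE : E =o[atTop] (fun n => (n : ℝ)))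
    (hlo_le : ∀ n, lo n - E n ≤ f n) (hle_hi : ∀ n, f n ≤ hi n + E n) :
    Tendsto (fun n => f n / n) atTop (𝓝 a) := by
  refine tendsto_of_tendsto_of_tendsto_of_le_of_le (g := fun n => (lo n - E n) / n)
    (h := fun n => (hi n + E n) / n) ?_ ?_ (fun n => ?_) (fun n => ?_)
  · simpa [sub_div] using hlo.sub hE.tendsto_div_nhds_zero
  · simpa [add_div] using hhi.add hE.tendsto_div_nhds_zero
  · exact div_le_div_of_nonneg_right (hlo_le n) n.cast_nonneg
  · exact div_le_div_of_nonneg_right (hle_hi n) n.cast_nonneg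

noncomputable def logErr (c : ℝ) (n : ℕ) : ℝ := c * (Real.logb 2 (n + 2) + 1)

lemma logErr_add (c c' : ℝ) (n : ℕ) : logErr (c + c') n = logErr c n + logErr c' n :=
  add_mul c c' _

lemma logb_natCast_add_two_nonneg (n : ℕ) : 0 ≤ Real.logb 2 ((n : ℝ) + 2) :=
  Real.logb_nonneg one_lt_two (by linarith [n.cast_nonneg (α := ℝ)])

lemma le_logErr {c : ℝ} (hc : 0 ≤ c) (n : ℕ) : c ≤ logErr c n := by
  unfold logErr
  nlinarith [logb_natCast_add_two_nonneg n]

lemma logErr_le_logErr {c c' : ℝ} {m n : ℕ} (hc : 0 ≤ c) (hcc' : c ≤ c') (hmn : m ≤ n) :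
    logErr c m ≤ logErr c' n := by
  have hlog : Real.logb 2 ((m : ℝ) + 2) ≤ Real.logb 2 ((n : ℝ) + 2) :=
    Real.logb_le_logb_of_le one_lt_two (by positivity) (by gcongr)
  unfold logErr
  nlinarith [logb_natCast_add_two_nonneg m]

lemma isLittleO_logErr (c : ℝ) : logErr c =o[atTop] (fun n : ℕ => (n : ℝ)) := by
  have hO : (fun n : ℕ => (n : ℝ) + 2) =O[atTop] (fun n : ℕ => (n : ℝ)) := by
    refine IsBigO.of_bound 3 ?_
    filter_upwards [eventually_ge_atTop 1] with n hn
    have : (1 : ℝ) ≤ n := by exact_mod_cast hn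
    rw [Real.norm_of_nonneg (by positivity), Real.norm_of_nonneg (by positivity)]
    linarith
  have hlog := ((Real.isLittleO_logb_id_atTop (b := 2)).comp_tendsto
    (tendsto_atTop_add_const_right _ 2 tendsto_natCast_atTop_atTop)).trans_isBigO hO
  have hone := (isLittleO_one_left_iff ℝ).2
    (tendsto_norm_atTop_atTop.comp (tendsto_natCast_atTop_atTop (R := ℝ)))
  exact (hlog.add hone).const_mul_left c

section ComplexityBounds

variable {K : List Bool → ℕ} {CK : List Bool → List Bool → ℕ}
  {K2 : List Bool × List Bool → List Bool → ℕ} {c₁ c₂ c₃ c₄ : ℕ}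

lemma CK_le_length_add_logErr
    (F4 : ∀ u w : List Bool,
      (CK u w : ℝ) ≤ u.length + c₄ * Real.logb 2 (u.length + 2) + c₄)
    {u : List Bool} (w : List Bool) {n : ℕ} (hu : u.length ≤ n) :
    (CK u w : ℝ) ≤ u.length + logErr c₄ n := by
  have hmono := logErr_le_logErr (c := c₄) c₄.cast_nonneg le_rfl hu
  unfold logErr at hmono ⊢
  linarith [F4 u w]

lemma le_CK_selT
    (F1 : ∀ u w : List Bool, (K u : ℤ) - CK u w ≤ K w + c₁)
    (F2 : ∀ u w : List Bool, u.length = w.length →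
      (CK u w : ℤ) - K2 (selT u w, selF u w) w ≤ c₂)
    (F3 : ∀ u v w : List Bool,
      (K2 (u, v) w : ℝ) ≤ CK u w + CK v w + c₃ * Real.logb 2 (u.length + v.length + 2) + c₃)
    (F4 : ∀ u w : List Bool,
      (CK u w : ℝ) ≤ u.length + c₄ * Real.logb 2 (u.length + 2) + c₄)
    {u w : List Bool} (h : u.length = w.length) :
    (K u : ℝ) - K w - w.count false - logErr ((c₁ : ℝ) + c₂ + c₃ + c₄) w.length
      ≤ CK (selT u w) w := by
  obtain ⟨hT, hF⟩ := length_selT_selF h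
  have hsum : (selT u w).length + (selF u w).length = w.length := by
    rw [hT, hF, List.count_true_add_count_false]
  have h₁ : (K u : ℝ) ≤ CK u w + K w + c₁ := by
    exact_mod_cast (by linarith [F1 u w] : (K u : ℤ) ≤ CK u w + K w + c₁)
  have h₂ : (CK u w : ℝ) ≤ K2 (selT u w, selF u w) w + c₂ := by
    exact_mod_cast (by linarith [F2 u w h] : (CK u w : ℤ) ≤ K2 (selT u w, selF u w) w + c₂)
  have h₃ : (K2 (selT u w, selF u w) w : ℝ)
      ≤ CK (selT u w) w + CK (selF u w) w + logErr c₃ w.length := by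
    rw [← hsum, logErr]
    push_cast
    linarith [F3 (selT u w) (selF u w) w]
  have h₄ : (CK (selF u w) w : ℝ) ≤ w.count false + logErr c₄ w.length := by
    have hle : (selF u w).length ≤ w.length := hF ▸ List.count_le_length
    simpa only [hF] using CK_le_length_add_logErr F4 w hle
  have hconst : (c₁ : ℝ) + c₂ ≤ logErr c₁ w.length + logErr c₂ w.length :=
    add_le_add (le_logErr c₁.cast_nonneg _) (le_logErr c₂.cast_nonneg _)
  rw [logErr_add, logErr_add, logErr_add]
  linarith

lemma CK_selT_le
    (F4 : ∀ u w : List Bool,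
      (CK u w : ℝ) ≤ u.length + c₄ * Real.logb 2 (u.length + 2) + c₄)
    {u w : List Bool} (h : u.length = w.length) :
    (CK (selT u w) w : ℝ) ≤ w.count true + logErr c₄ w.length := by
  have hT := (length_selT_selF h).1
  have hle : (selT u w).length ≤ w.length := hT ▸ List.count_le_length
  simpa only [hT] using CK_le_length_add_logErr F4 w hle

end ComplexityBounds

/-- Proposition 2, (i) ⇒ (ii), boundary case of selection density `1`.
The standard prefix-complexity facts are taken as hypotheses, as in the
density `d ∈ (0,1)` case. -/
theorem selected_complexity_rate_one_of_zero_rate_selector_density_one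
    (K : List Bool → ℕ) (CK : List Bool → List Bool → ℕ)
    (K2 : List Bool × List Bool → List Bool → ℕ)
    (F1 : ∃ c : ℕ, ∀ u w : List Bool,
      (K u : ℤ) - CK u w ≤ K w + c ∧ (CK u w : ℤ) - K u ≤ K w + c)
    (F2 : ∃ c : ℕ, ∀ u w : List Bool, u.length = w.length →
      (CK u w : ℤ) - K2 (selT u w, selF u w) w ≤ c ∧
      (K2 (selT u w, selF u w) w : ℤ) - CK u w ≤ c)
    (F3 : ∃ c : ℕ, ∀ u v w : List Bool,
      (K2 (u, v) w : ℝ) ≤ CK u w + CK v w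
        + c * Real.logb 2 (u.length + v.length + 2) + c)
    (F4 : ∃ c : ℕ, ∀ u w : List Bool,
      (CK u w : ℝ) ≤ u.length + c * Real.logb 2 (u.length + 2) + c)
    (x y : ℕ → Bool)
    (hdens : Tendsto (fun n => ((pref y n).count true : ℝ) / n) atTop (nhds 1))
    (hy : Tendsto (fun n => (K (pref y n) : ℝ) / n) atTop (nhds 0))
    (hx : Tendsto (fun n => (K (pref x n) : ℝ) / n) atTop (nhds 1)) :
    Tendsto (fun n => (CK (selT (pref x n) (pref y n)) (pref y n) : ℝ)
        / ((pref y n).count true : ℝ)) atTop (nhds 1) := by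
  obtain ⟨c₁, hF1⟩ := F1
  obtain ⟨c₂, hF2⟩ := F2
  obtain ⟨c₃, hF3⟩ := F3
  obtain ⟨c₄, hF4⟩ := F4
  have hlen (n : ℕ) : (pref x n).length = (pref y n).length := by simp [length_pref]
  have hrate : Tendsto (fun n => (CK (selT (pref x n) (pref y n)) (pref y n) : ℝ) / n)
      atTop (𝓝 1) := by
    refine tendsto_div_natCast_of_sandwich
      (lo := fun n => (K (pref x n) : ℝ) - K (pref y n) - (pref y n).count false) ?_ hdens
      (isLittleO_logErr ((c₁ : ℝ) + c₂ + c₃ + c₄)) (fun n => ?_) (fun n => ?_)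
    · simpa [sub_div] using (hx.sub hy).sub (tendsto_count_false_div hdens)
    · simpa [length_pref] using le_CK_selT (fun u w => (hF1 u w).1)
        (fun u w h => (hF2 u w h).1) hF3 hF4 (hlen n)
    · refine (CK_selT_le hF4 (hlen n)).trans ?_
      rw [length_pref]
      gcongr
      exact logErr_le_logErr c₄.cast_nonneg (le_add_of_nonneg_left (by positivity)) le_rfl
  have hquot := hrate.div hdens one_ne_zero
  rw [div_one] at hquot
  refine hquot.congr' ?_
  filter_upwards [eventually_ne_atTop 0] with n hn
  exact div_div_div_cancel_right₀ (Nat.cast_ne_zero.2 hn) _ _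
end
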